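/- arXiv:1701.07630 — 8 statements merged into one kernel-verified Lean document; each statement's English description precedes it below -/
import Mathlib

section
/- Let R be a finite commutative ring and x ∈ R. If 2x is nil clean, then the degree of x in the nil clean graph G_N(R) equals |NC(R)| − 1. -/
def IsNilClean {R : Type*} [CommRing R] (r : R) : Prop :=
  ∃ n e : R, IsNilpotent n ∧ IsIdempotentElem e ∧ r = n + e

def nilCleanGraph (R : Type*) [CommRing R] : SimpleGraph R where
  Adj x y := x ≠ y ∧ IsNilClean (x + y)
  symm := by
    constructor
    rintro x y ⟨hxy, n, e, hn, he, h⟩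
    exact ⟨hxy.symm, n, e, hn, he, by rwa [add_comm]⟩
  loopless := by constructor; rintro x ⟨h, -⟩; exact h rfl

open Pointwise

theorem neighborSet_nilCleanGraph {R : Type*} [CommRing R] (x : R) :
    (nilCleanGraph R).neighborSet x = -x +ᵥ ({r : R | IsNilClean r} \ {2 * x}) := by
  ext y
  rw [Set.mem_vadd_set_iff_neg_vadd_mem, neg_neg, vadd_eq_add, two_mul]
  simp only [SimpleGraph.mem_neighborSet, nilCleanGraph, Set.mem_sdiff, Set.mem_ofPred_eq,
    Set.mem_singleton_iff, add_right_inj]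
  tauto

theorem stmt2_general (R : Type*) [CommRing R] (x : R) (h : IsNilClean (2 * x)) :
    ((nilCleanGraph R).neighborSet x).ncard = {r : R | IsNilClean r}.ncard - 1 := by
  rw [neighborSet_nilCleanGraph, Set.ncard_vadd_set,
    Set.ncard_sdiff_singleton_of_mem (s := {r : R | IsNilClean r}) h]

theorem stmt2 (R : Type*) [CommRing R] [Fintype R] (x : R) (h : IsNilClean (2 * x)) :
    ((nilCleanGraph R).neighborSet x).ncard = {r : R | IsNilClean r}.ncard - 1 :=
  stmt2_general R x h
end

section
/- Let R be a finite commutative ring and x ∈ R. If 2x is not nil clean, then the degree of x in the nil clean graph G_N(R) equals |NC(R)|. -/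
/-! Translation by `x` maps the neighbours `y` of `x` bijectively onto the nil clean elements
`x + y` other than `x + x = 2x`; if `2x` is not nil clean, no element is lost. -/

theorem nilCleanGraph_image_add_neighborSet {R : Type*} [CommRing R] (x : R) :
    (x + ·) '' (nilCleanGraph R).neighborSet x = {r | IsNilClean r} \ {2 * x} := by
  ext r
  constructor
  · rintro ⟨y, ⟨hxy, hy⟩, rfl⟩
    refine ⟨hy, fun h2 => hxy ?_⟩
    linear_combination (Set.mem_singleton_iff.mp h2).symm
  · rintro ⟨hr, hr2⟩
    refine ⟨r - x, ⟨fun hx => hr2 ?_, by rwa [add_sub_cancel]⟩, add_sub_cancel x r⟩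
    rw [Set.mem_singleton_iff]
    linear_combination -hx

theorem ncard_neighborSet_nilCleanGraph {R : Type*} [CommRing R] (x : R) :
    ((nilCleanGraph R).neighborSet x).ncard = ({r | IsNilClean r} \ {2 * x}).ncard := by
  rw [← nilCleanGraph_image_add_neighborSet,
    Set.ncard_image_of_injective _ (add_right_injective x)]

theorem stmt3_general (R : Type*) [CommRing R] (x : R) (h : ¬ IsNilClean (2 * x)) :
    ((nilCleanGraph R).neighborSet x).ncard = {r : R | IsNilClean r}.ncard := by
  have h2x : 2 * x ∉ {r : R | IsNilClean r} := h
  rw [ncard_neighborSet_nilCleanGraph, Set.sdiff_singleton_eq_self h2x]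

theorem stmt3 (R : Type*) [CommRing R] [Fintype R] (x : R) (h : ¬ IsNilClean (2 * x)) :
    ((nilCleanGraph R).neighborSet x).ncard = {r : R | IsNilClean r}.ncard :=
  stmt3_general R x h
end

section
/- For every positive integer n and every element a of Z_n, there is a path in the nil clean graph G_N(Z_n) from a to 0; consequently G_N(Z_n) is a connected graph. -/
/-!
Since `0` and `1` are nil clean, `x + 1` is adjacent to `-x` and `-x` to `x` (whenever distinct).
Hence `k + 1` is joined to `k` for every integer `k`, so every integer multiple of `1` is
joined to `0`, and in `ZMod n` every element is such a multiple.
-/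

lemma IsNilClean.of_isIdempotentElem {R : Type*} [CommRing R] {e : R}
    (he : IsIdempotentElem e) : IsNilClean e :=
  ⟨0, e, IsNilpotent.zero, he, (zero_add e).symm⟩

namespace nilCleanGraph

variable {R : Type*} [CommRing R]

lemma reachable_of_isNilClean_add {x y : R} (h : IsNilClean (x + y)) :
    (nilCleanGraph R).Reachable x y := by
  by_cases hxy : x = y
  · exact hxy ▸ SimpleGraph.Reachable.refl x
  · exact SimpleGraph.Adj.reachable ⟨hxy, h⟩

lemma reachable_neg_self (x : R) : (nilCleanGraph R).Reachable (-x) x :=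
  reachable_of_isNilClean_add <| by
    simpa using IsNilClean.of_isIdempotentElem (IsIdempotentElem.zero (M₀ := R))

lemma reachable_add_one_neg (x : R) : (nilCleanGraph R).Reachable (x + 1) (-x) :=
  reachable_of_isNilClean_add <| by
    simpa using IsNilClean.of_isIdempotentElem (IsIdempotentElem.one (M := R))

lemma reachable_add_one (x : R) : (nilCleanGraph R).Reachable (x + 1) x :=
  (reachable_add_one_neg x).trans (reachable_neg_self x)

lemma reachable_intCast_zero (k : ℤ) : (nilCleanGraph R).Reachable (k : R) 0 := by
  induction k using Int.induction_on with
  | zero => simp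
  | succ k ih =>
    push_cast at ih ⊢
    exact (reachable_add_one _).trans ih
  | pred k ih =>
    push_cast at ih ⊢
    exact (reachable_add_one _).symm.trans (by rwa [sub_add_cancel])

end nilCleanGraph

theorem stmt4_general (n : ℕ) :
    (∀ a : ZMod n, (nilCleanGraph (ZMod n)).Reachable a 0) ∧
      (nilCleanGraph (ZMod n)).Connected := by
  have reach_zero (a : ZMod n) : (nilCleanGraph (ZMod n)).Reachable a 0 := by
    obtain ⟨k, rfl⟩ := ZMod.intCast_surjective a
    exact nilCleanGraph.reachable_intCast_zero k
  exact ⟨reach_zero, ⟨fun a b => (reach_zero a).trans (reach_zero b).symm⟩⟩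

theorem stmt4 (n : ℕ) (hn : 0 < n) :
    (∀ a : ZMod n, (nilCleanGraph (ZMod n)).Reachable a 0) ∧
      (nilCleanGraph (ZMod n)).Connected :=
  stmt4_general n
end

section
/- If R is a finite commutative ring that is not a field, then the girth of the nil clean graph G_N(R) is 3, i.e., G_N(R) contains a 3-cycle. -/
theorem SimpleGraph.girth_eq_three_of_adj {V : Type*} {G : SimpleGraph V} {a b c : V}
    (hab : G.Adj a b) (hbc : G.Adj b c) (hca : G.Adj c a) : G.girth = 3 := by
  classical
  obtain ⟨u, w, hw, hlen⟩ := is3Clique_iff_exists_cycle_length_three.mp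
    ⟨_, is3Clique_triple_iff.mpr ⟨hab, hca.symm, hbc⟩⟩
  exact le_antisymm (hlen ▸ girth_le_length hw) (three_le_girth fun hG => hG w hw)

section Monoid

variable {M : Type*} [Monoid M]

theorem pow_add_mul_eq_pow {a : M} {i r : ℕ} (h : a ^ (i + r) = a ^ i) (t : ℕ) :
    a ^ (i + t * r) = a ^ i := by
  induction t with
  | zero => simp
  | succ t ih => rw [add_mul, one_mul, ← add_assoc, pow_add, ih, ← pow_add, h]

theorem exists_isIdempotentElem_pow [Finite M] (a : M) :
    ∃ k ≠ 0, IsIdempotentElem (a ^ k) := by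
  obtain ⟨i, j, hne, hij⟩ := Finite.exists_ne_map_eq_of_infinite (a ^ · : ℕ → M)
  wlog hlt : i < j generalizing i j
  · exact this j i hne.symm hij.symm (by omega)
  set r := j - i
  have hper : a ^ (i + r) = a ^ i := by rw [Nat.add_sub_cancel' hlt.le]; exact hij.symm
  -- `k` is a multiple of the period `r` beyond the preperiod `i`, so `a ^ (2 * k) = a ^ k`
  have hk : i ≤ (i + 1) * r := le_trans (Nat.le_succ i) (Nat.le_mul_of_pos_right _ (by omega))
  refine ⟨(i + 1) * r, Nat.mul_ne_zero (Nat.succ_ne_zero i) (by omega), ?_⟩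
  calc a ^ ((i + 1) * r) * a ^ ((i + 1) * r)
      = a ^ ((i + 1) * r - i) * a ^ (i + (i + 1) * r) := by
        rw [← pow_add, ← pow_add]; congr 1; omega
    _ = a ^ ((i + 1) * r) := by
        rw [pow_add_mul_eq_pow hper, ← pow_add, Nat.sub_add_cancel hk]

theorem exists_isIdempotentElem_pow_ne_one [Finite M] {a : M} (ha : ¬IsUnit a) :
    ∃ k ≠ 0, IsIdempotentElem (a ^ k) ∧ a ^ k ≠ 1 := by
  obtain ⟨k, hk, he⟩ := exists_isIdempotentElem_pow a
  exact ⟨k, hk, he, fun h1 => ha (IsUnit.of_pow_eq_one h1 hk)⟩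

end Monoid

section CommRing

variable {R : Type*} [CommRing R]

theorem exists_ne_zero_not_isUnit_of_not_isField [Nontrivial R] (h : ¬IsField R) :
    ∃ a : R, a ≠ 0 ∧ ¬IsUnit a := by
  by_contra! hunit
  exact h ⟨exists_pair_ne R, mul_comm, fun ha => (hunit _ ha).exists_right_inv⟩

theorem exists_isNilpotent_or_isIdempotentElem_of_not_isField [Finite R] [Nontrivial R]
    (h : ¬IsField R) :
    (∃ n : R, n ≠ 0 ∧ IsNilpotent n) ∨ ∃ e : R, IsIdempotentElem e ∧ e ≠ 0 ∧ e ≠ 1 := by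
  obtain ⟨a, ha0, ha⟩ := exists_ne_zero_not_isUnit_of_not_isField h
  obtain ⟨k, hk, he, he1⟩ := exists_isIdempotentElem_pow_ne_one ha
  by_cases he0 : a ^ k = 0
  · exact .inl ⟨a, ha0, k, he0⟩
  · exact .inr ⟨a ^ k, he, he0, he1⟩

theorem IsNilpotent.isNilClean {n : R} (hn : IsNilpotent n) : IsNilClean n :=
  ⟨n, 0, hn, .zero, (add_zero n).symm⟩

theorem IsIdempotentElem.isNilClean {e : R} (he : IsIdempotentElem e) : IsNilClean e :=
  ⟨0, e, .zero, he, (zero_add e).symm⟩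

theorem nilCleanGraph_girth_of_isNilpotent [Nontrivial R] {n : R} (hn0 : n ≠ 0)
    (hn : IsNilpotent n) : (nilCleanGraph R).girth = 3 := by
  have hn1 : n ≠ 1 := fun h => not_isNilpotent_one (h ▸ hn)
  refine SimpleGraph.girth_eq_three_of_adj (a := 0) (b := n) (c := 1)
    ⟨hn0.symm, by simpa using hn.isNilClean⟩ ⟨hn1, n, 1, hn, .one, rfl⟩
    ⟨one_ne_zero, by simpa using IsIdempotentElem.one.isNilClean⟩

theorem nilCleanGraph_girth_of_isIdempotentElem {e : R} (he : IsIdempotentElem e) (he0 : e ≠ 0)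
    (he1 : e ≠ 1) : (nilCleanGraph R).girth = 3 := by
  -- `e = 1 - e` would give `e = e * e = e * (1 - e) = 0`
  have hne : e ≠ 1 - e := fun h => he0 (by rw [← he.eq, ← he.mul_one_sub_self, ← h])
  refine SimpleGraph.girth_eq_three_of_adj (a := 0) (b := e) (c := 1 - e)
    ⟨he0.symm, by simpa using he.isNilClean⟩
    ⟨hne, by simpa using IsIdempotentElem.one.isNilClean⟩
    ⟨sub_ne_zero.mpr he1.symm, by simpa using he.one_sub.isNilClean⟩

end CommRing

theorem stmt6 (R : Type*) [CommRing R] [Fintype R] [Nontrivial R] (h : ¬ IsField R) :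
    (nilCleanGraph R).girth = 3 := by
  obtain ⟨n, hn0, hn⟩ | ⟨e, he, he0, he1⟩ :=
    exists_isNilpotent_or_isIdempotentElem_of_not_isField h
  · exact nilCleanGraph_girth_of_isNilpotent hn0 hn
  · exact nilCleanGraph_girth_of_isIdempotentElem he he0 he1
end

section
/- For a prime p, the nil clean graph of the field Z_p is the path 0 — 1 — (p−1) — 2 — (p−2) — 3 — ⋯ visiting every element exactly once; in particular, for p odd G_N(Z_p) is a tree (has no cycles). -/
/-! In a field the only nil clean elements are `0` and `1`, so the neighbours of `x` are `-x` and
`1 - x`. Hence `0, 1, -1, 2, -2, …` walks along the edges, and numbering `ZMod p` in this order is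
an isomorphism onto the path graph on `p` vertices, which is acyclic (every edge is a bridge) and
traced by a Hamiltonian path. -/

open SimpleGraph

theorem isNilClean_iff_of_isDomain {R : Type*} [CommRing R] [IsDomain R] (r : R) :
    IsNilClean r ↔ r = 0 ∨ r = 1 := by
  constructor
  · rintro ⟨n, e, hn, he, rfl⟩
    rwa [hn.eq_zero, zero_add, ← IsIdempotentElem.iff_eq_zero_or_one]
  · rintro (rfl | rfl)
    · exact ⟨0, 0, .zero, .zero, (add_zero 0).symm⟩
    · exact ⟨0, 1, .zero, .one, (zero_add 1).symm⟩

theorem nilCleanGraph_adj_iff_of_isDomain {R : Type*} [CommRing R] [IsDomain R] (x y : R) :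
    (nilCleanGraph R).Adj x y ↔ x ≠ y ∧ (x + y = 0 ∨ x + y = 1) :=
  and_congr_right fun _ ↦ isNilClean_iff_of_isDomain (x + y)

theorem pathGraph_isBridge {n : ℕ} {i j : Fin n} (h : i.val + 1 = j.val) :
    (pathGraph n).IsBridge s(i, j) := by
  rw [isBridge_iff]
  rintro ⟨w⟩
  obtain ⟨d, -, hfst, hsnd⟩ :=
    w.exists_boundary_dart {x | x.val ≤ i.val} (le_refl i.val)
      (fun hj : j.val ≤ i.val ↦ by omega)
  simp only [Set.mem_ofPred_eq, not_le] at hfst hsnd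
  obtain ⟨hadj, hne⟩ := deleteEdges_adj.mp d.adj
  have hd : d.fst = i ∧ d.snd = j := by
    rw [pathGraph_adj] at hadj
    constructor <;> ext <;> omega
  rw [hd.1, hd.2] at hne
  exact hne rfl

theorem pathGraph_isAcyclic (n : ℕ) : (pathGraph n).IsAcyclic := by
  rw [isAcyclic_iff_forall_adj_isBridge]
  intro i j hij
  rcases pathGraph_adj.mp hij with h | h
  · exact pathGraph_isBridge h
  · rw [Sym2.eq_swap]
    exact pathGraph_isBridge h

theorem pathGraph_exists_isHamiltonian (n : ℕ) [NeZero n] :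
    ∃ (u v : Fin n) (w : (pathGraph n).Walk u v), w.IsHamiltonian := by
  have descent : ∀ (k : ℕ) (hk : k < n),
      ∃ w : (pathGraph n).Walk ⟨k, hk⟩ ⟨0, Nat.zero_lt_of_lt hk⟩,
        w.IsPath ∧ ∀ v, v ∈ w.support ↔ v.val ≤ k := by
    intro k
    induction k with
    | zero =>
      refine fun _ ↦ ⟨.nil, .nil, fun v ↦ ?_⟩
      rw [Walk.support_nil, List.mem_singleton, Fin.ext_iff]
      exact Nat.le_zero.symm
    | succ k ih =>
      intro hk
      obtain ⟨w, hw, hsupp⟩ := ih (by omega)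
      have hadj : (pathGraph n).Adj ⟨k + 1, hk⟩ ⟨k, by omega⟩ :=
        pathGraph_adj.mpr (Or.inr rfl)
      have hfresh : ⟨k + 1, hk⟩ ∉ w.support := fun h ↦
        Nat.not_succ_le_self k ((hsupp _).mp h)
      refine ⟨.cons hadj w, hw.cons hfresh, fun v ↦ ?_⟩
      rw [Walk.support_cons, List.mem_cons, hsupp, Fin.ext_iff]
      change v.val = k + 1 ∨ v.val ≤ k ↔ v.val ≤ k + 1
      omega
  obtain ⟨w, hw, hsupp⟩ := descent (n - 1) (Nat.sub_one_lt (NeZero.ne n))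
  exact ⟨_, _, w, hw.isHamiltonian_iff.mpr fun v ↦ (hsupp v).mpr (by omega)⟩

namespace ZMod

variable {n : ℕ}

theorem add_eq_iff_val_add [NeZero n] (x y c : ZMod n) :
    x + y = c ↔ x.val + y.val = c.val ∨ x.val + y.val = c.val + n := by
  have hc := c.val_lt
  rw [← (val_injective n).eq_iff]
  rcases lt_or_ge (x.val + y.val) n with h | h
  · rw [val_add_of_lt h]
    omega
  · rw [val_add_of_le h]
    omega

/-- The position of `x` on the path `0, 1, n - 1, 2, n - 2, 3, …`: a residue `1 ≤ a ≤ n / 2`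
sits at `2 a - 1`, and `n - a` at `2 a`. Truncated subtraction puts `0` at `2 * 0 - 1 = 0`. -/
def zigzagIndex (x : ZMod n) : ℕ :=
  if 2 * x.val ≤ n then 2 * x.val - 1 else 2 * (n - x.val)

theorem zigzagIndex_lt [NeZero n] (x : ZMod n) : x.zigzagIndex < n := by
  have := x.val_lt
  unfold zigzagIndex
  split_ifs <;> omega

theorem zigzagIndex_injective [NeZero n] : Function.Injective (zigzagIndex : ZMod n → ℕ) := by
  intro x y h
  have := x.val_lt
  have := y.val_lt
  apply val_injective
  unfold zigzagIndex at h
  split_ifs at h <;> omega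

theorem zigzagIndex_adj_iff [Fact (1 < n)] (x y : ZMod n) :
    x ≠ y ∧ (x + y = 0 ∨ x + y = 1) ↔
      x.zigzagIndex + 1 = y.zigzagIndex ∨ y.zigzagIndex + 1 = x.zigzagIndex := by
  have := x.val_lt
  have := y.val_lt
  rw [Ne, ← (val_injective n).eq_iff, add_eq_iff_val_add, add_eq_iff_val_add, val_zero, val_one]
  unfold zigzagIndex
  split_ifs <;> omega

noncomputable def zigzagEquiv (n : ℕ) [NeZero n] : ZMod n ≃ Fin n :=
  Equiv.ofBijective (fun x ↦ ⟨x.zigzagIndex, x.zigzagIndex_lt⟩) <| by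
    rw [Fintype.bijective_iff_injective_and_card, ZMod.card, Fintype.card_fin]
    exact ⟨fun x y h ↦ zigzagIndex_injective (Fin.mk.inj h), rfl⟩

end ZMod

noncomputable def nilCleanGraphIsoPathGraph (p : ℕ) [Fact p.Prime] :
    nilCleanGraph (ZMod p) ≃g pathGraph p where
  toEquiv := ZMod.zigzagEquiv p
  map_rel_iff' {x y} := by
    rw [pathGraph_adj, nilCleanGraph_adj_iff_of_isDomain]
    exact (ZMod.zigzagIndex_adj_iff x y).symm

theorem stmt9 (p : ℕ) [Fact p.Prime] :
    (∃ (u v : ZMod p) (w : (nilCleanGraph (ZMod p)).Walk u v),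
      w.IsPath ∧ ∀ z : ZMod p, z ∈ w.support) ∧
    (Odd p → (nilCleanGraph (ZMod p)).IsAcyclic) := by
  let φ := nilCleanGraphIsoPathGraph p
  refine ⟨?_, fun _ ↦ φ.isAcyclic_iff.mpr (pathGraph_isAcyclic p)⟩
  obtain ⟨u, v, w, hw⟩ := pathGraph_exists_isHamiltonian p
  have hw' := hw.map φ.symm.toHom φ.symm.bijective
  exact ⟨_, _, _, hw'.isPath, hw'.mem_support⟩
end

section
/- Let R be a finite commutative weak nil clean ring. Then {1, 2} is a dominating set for the nil clean graph G_N(R). -/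
section

variable {R : Type*} [CommRing R]

lemma isNilClean_add_one_of_eq_sub {r n e : R} (hn : IsNilpotent n) (he : IsIdempotentElem e)
    (h : r = n - e) : IsNilClean (r + 1) :=
  ⟨n, 1 - e, hn, he.one_sub, by rw [h]; ring⟩

lemma isNilClean_or_isNilClean_add_one {r : R}
    (hr : ∃ n e : R, IsNilpotent n ∧ IsIdempotentElem e ∧ (r = n + e ∨ r = n - e)) :
    IsNilClean r ∨ IsNilClean (r + 1) := by
  obtain ⟨n, e, hn, he, h | h⟩ := hr
  · exact .inl ⟨n, e, hn, he, h⟩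
  · exact .inr (isNilClean_add_one_of_eq_sub hn he h)

lemma eq_or_nilCleanGraph_adj_of_isNilClean_add {a b : R} (h : IsNilClean (a + b)) :
    a = b ∨ (nilCleanGraph R).Adj a b := by
  by_cases hab : a = b
  · exact .inl hab
  · exact .inr ⟨hab, h⟩

end

theorem stmt14_general (R : Type*) [CommRing R]
    (hwnc : ∀ r : R, ∃ n e : R, IsNilpotent n ∧ IsIdempotentElem e ∧
      (r = n + e ∨ r = n - e)) :
    ∀ a : R, a = 1 ∨ a = 2 ∨ (nilCleanGraph R).Adj a 1 ∨ (nilCleanGraph R).Adj a 2 := by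
  intro a
  rcases isNilClean_or_isNilClean_add_one (hwnc (a + 1)) with h₁ | h₂
  · rcases eq_or_nilCleanGraph_adj_of_isNilClean_add h₁ with h | h <;> tauto
  · rw [add_assoc, one_add_one_eq_two] at h₂
    rcases eq_or_nilCleanGraph_adj_of_isNilClean_add h₂ with h | h <;> tauto

theorem stmt14 (R : Type*) [CommRing R] [Fintype R]
    (hwnc : ∀ r : R, ∃ n e : R, IsNilpotent n ∧ IsIdempotentElem e ∧
      (r = n + e ∨ r = n - e)) :
    ∀ a : R, a = 1 ∨ a = 2 ∨ (nilCleanGraph R).Adj a 1 ∨ (nilCleanGraph R).Adj a 2 :=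
  stmt14_general R hwnc
end

section
/- A finite commutative ring R is nil clean if and only if the diameter of its nil clean graph G_N(R) equals 1. -/
theorem isNilClean_zero {R : Type*} [CommRing R] : IsNilClean (0 : R) :=
  ⟨0, 0, IsNilpotent.zero, IsIdempotentElem.zero, (add_zero 0).symm⟩

theorem nilCleanGraph_eq_top_iff {R : Type*} [CommRing R] :
    nilCleanGraph R = ⊤ ↔ ∀ r : R, IsNilClean r := by
  constructor
  · intro h r
    rcases eq_or_ne r 0 with rfl | hr
    · exact isNilClean_zero
    · have hadj : (nilCleanGraph R).Adj 0 r := h ▸ hr.symm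
      simpa using hadj.2
  · intro h
    ext x y
    exact ⟨And.left, fun hxy => ⟨hxy, h _⟩⟩

theorem stmt17_general (R : Type*) [CommRing R] [Nontrivial R] :
    (∀ r : R, IsNilClean r) ↔ (nilCleanGraph R).diam = 1 := by
  rw [SimpleGraph.diam_eq_one, nilCleanGraph_eq_top_iff]

theorem stmt17 (R : Type*) [CommRing R] [Fintype R] [Nontrivial R] :
    (∀ r : R, IsNilClean r) ↔ (nilCleanGraph R).diam = 1 :=
  stmt17_general R
end

section
/- For a prime p, the diameter of the nil clean graph G_N(Z_p) equals p − 1. -/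
/-! In a domain, `x + y` is nil clean iff it is `0` or `1`, so the neighbours of `x` are `-x` and
`1 - x`. In `ZMod p` this makes the graph the path `0 — 1 — -1 — 2 — -2 — ⋯` through all `p`
elements, each adjacent only to its neighbours on the path, so its diameter is `p - 1`. -/

section NilClean

variable {R : Type*} [CommRing R]

lemma IsNilClean.zero : IsNilClean (0 : R) :=
  ⟨0, 0, .zero, .zero, by rw [add_zero]⟩

lemma IsNilClean.one : IsNilClean (1 : R) :=
  ⟨0, 1, .zero, .one, by rw [zero_add]⟩

lemma isNilClean_iff_eq_zero_or_eq_one [IsDomain R] {r : R} :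
    IsNilClean r ↔ r = 0 ∨ r = 1 := by
  refine ⟨?_, fun h => h.elim (· ▸ .zero) (· ▸ .one)⟩
  rintro ⟨n, e, hn, he, rfl⟩
  rwa [hn.eq_zero, zero_add, ← IsIdempotentElem.iff_eq_zero_or_one]

end NilClean

/-- The sequence `0, 1, -1, 2, -2, 3, …`, along which consecutive terms sum alternately to
`1` and `0`. -/
def zigzag (R : Type*) [AddGroupWithOne R] (k : ℕ) : R :=
  if Even k then -((k / 2 : ℕ) : R) else ((k / 2 + 1 : ℕ) : R)

section Zigzag

variable {R : Type*} [AddGroupWithOne R]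

@[simp]
lemma zigzag_two_mul (m : ℕ) : zigzag R (2 * m) = -(m : R) := by
  simp [zigzag]

@[simp]
lemma zigzag_two_mul_add_one (m : ℕ) : zigzag R (2 * m + 1) = m + 1 := by
  simp [zigzag, Nat.not_even_bit1, Nat.mul_add_div]

@[simp]
lemma zigzag_two_mul_sub_one (m : ℕ) : zigzag R (2 * m - 1) = m := by
  rcases m with _ | m
  · simp [zigzag]
  · rw [show 2 * (m + 1) - 1 = 2 * m + 1 by omega, zigzag_two_mul_add_one, Nat.cast_succ]

end Zigzag

section Graph

variable {R : Type*} [CommRing R]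

lemma nilCleanGraph_adj_iff [IsDomain R] {x y : R} :
    (nilCleanGraph R).Adj x y ↔ x ≠ y ∧ (x + y = 0 ∨ x + y = 1) :=
  and_congr_right fun _ => isNilClean_iff_eq_zero_or_eq_one

lemma nilCleanGraph_adj_zigzag_succ {k : ℕ} (hk : ((k + 1 : ℕ) : R) ≠ 0) :
    (nilCleanGraph R).Adj (zigzag R k) (zigzag R (k + 1)) := by
  obtain ⟨m, rfl | rfl⟩ := Nat.even_or_odd' k
  · refine ⟨fun h => hk ?_, ?_⟩
    · simp only [zigzag_two_mul_add_one, zigzag_two_mul] at h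
      push_cast
      linear_combination -h
    · simpa using IsNilClean.one
  · rw [show 2 * m + 1 + 1 = 2 * (m + 1) by ring] at hk ⊢
    refine ⟨fun h => hk ?_, ?_⟩
    · simp only [zigzag_two_mul_add_one, zigzag_two_mul] at h
      push_cast at h ⊢
      linear_combination h
    · simpa using IsNilClean.zero

lemma eq_zigzag_of_adj_zigzag [IsDomain R] {i : ℕ} {y : R}
    (h : (nilCleanGraph R).Adj (zigzag R i) y) :
    y = zigzag R (i - 1) ∨ y = zigzag R (i + 1) := by
  obtain ⟨-, hsum⟩ := nilCleanGraph_adj_iff.mp h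
  obtain ⟨m, rfl | rfl⟩ := Nat.even_or_odd' i
  · simp only [zigzag_two_mul, zigzag_two_mul_add_one, zigzag_two_mul_sub_one] at hsum ⊢
    rcases hsum with hsum | hsum
    · left; linear_combination hsum
    · right; linear_combination hsum
  · rw [Nat.add_sub_cancel, show 2 * m + 1 + 1 = 2 * (m + 1) by ring]
    simp only [zigzag_two_mul, zigzag_two_mul_add_one] at hsum ⊢
    rcases hsum with hsum | hsum
    · right; push_cast; linear_combination hsum
    · left; linear_combination hsum

lemma exists_eq_zigzag_of_walk [IsDomain R] {x y : R} (w : (nilCleanGraph R).Walk x y)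
    {i : ℕ} (hx : x = zigzag R i) : ∃ j ≤ i + w.length, y = zigzag R j := by
  induction w generalizing i with
  | nil => exact ⟨i, by simp, hx⟩
  | cons h w ih =>
    subst hx
    rw [SimpleGraph.Walk.length_cons]
    rcases eq_zigzag_of_adj_zigzag h with h' | h'
    · obtain ⟨j, hj, rfl⟩ := ih h'
      exact ⟨j, by omega, rfl⟩
    · obtain ⟨j, hj, rfl⟩ := ih h'
      exact ⟨j, by omega, rfl⟩

end Graph

section ZMod

variable {n : ℕ}

lemma zigzag_injOn : Set.InjOn (zigzag (ZMod n)) (Set.Iio n) := by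
  have cast_inj {a b : ℕ} (ha : a < n) (hb : b < n) (h : (a : ZMod n) = b) : a = b := by
    rwa [ZMod.natCast_eq_natCast_iff', Nat.mod_eq_of_lt ha, Nat.mod_eq_of_lt hb] at h
  have cross {a b : ℕ} (ha : 2 * a < n) (hb : 2 * b + 1 < n) :
      zigzag (ZMod n) (2 * a) ≠ zigzag (ZMod n) (2 * b + 1) := by
    intro h
    have hdvd : n ∣ a + b + 1 := by
      rw [← ZMod.natCast_eq_zero_iff]
      simp only [zigzag_two_mul, zigzag_two_mul_add_one] at h
      push_cast
      linear_combination -h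
    exact absurd (Nat.le_of_dvd (by omega) hdvd) (by omega)
  intro i hi j hj h
  simp only [Set.mem_Iio] at hi hj
  obtain ⟨a, rfl | rfl⟩ := Nat.even_or_odd' i <;> obtain ⟨b, rfl | rfl⟩ := Nat.even_or_odd' j
  · simp only [zigzag_two_mul, neg_inj] at h
    rw [cast_inj (by omega) (by omega) h]
  · exact absurd h (cross hi hj)
  · exact absurd h.symm (cross hj hi)
  · simp only [zigzag_two_mul_add_one, add_left_inj] at h
    rw [cast_inj (by omega) (by omega) h]

lemma exists_lt_zigzag_eq [NeZero n] (x : ZMod n) : ∃ i < n, zigzag (ZMod n) i = x := by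
  have hbij : Function.Bijective fun i : Fin n => zigzag (ZMod n) i :=
    (Fintype.bijective_iff_injective_and_card _).mpr
      ⟨fun i j h => Fin.ext (zigzag_injOn i.isLt j.isLt h), by simp⟩
  obtain ⟨i, rfl⟩ := hbij.2 x
  exact ⟨i, i.isLt, rfl⟩

lemma edist_zigzag_le {i : ℕ} :
    ∀ d, i + d < n → (nilCleanGraph (ZMod n)).edist (zigzag _ i) (zigzag _ (i + d)) ≤ d
  | 0, _ => by simp
  | d + 1, h => by
    have hadj : (nilCleanGraph (ZMod n)).Adj (zigzag _ (i + d)) (zigzag _ (i + d + 1)) := by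
      refine nilCleanGraph_adj_zigzag_succ fun h0 => ?_
      rw [ZMod.natCast_eq_zero_iff] at h0
      exact absurd (Nat.le_of_dvd (by omega) h0) (by omega)
    calc (nilCleanGraph (ZMod n)).edist (zigzag _ i) (zigzag _ (i + (d + 1)))
        ≤ (nilCleanGraph (ZMod n)).edist (zigzag _ i) (zigzag _ (i + d))
          + (nilCleanGraph (ZMod n)).edist (zigzag _ (i + d)) (zigzag _ (i + d + 1)) :=
          SimpleGraph.edist_triangle
      _ ≤ d + 1 :=
          add_le_add (edist_zigzag_le d (by omega)) (SimpleGraph.edist_eq_one_iff_adj.mpr hadj).le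
      _ = (d + 1 : ℕ) := by push_cast; rfl

lemma ediam_nilCleanGraph_zmod_le [NeZero n] :
    (nilCleanGraph (ZMod n)).ediam ≤ (n - 1 : ℕ) := by
  refine SimpleGraph.ediam_le_of_edist_le fun x y => ?_
  obtain ⟨i, hi, rfl⟩ := exists_lt_zigzag_eq x
  obtain ⟨j, hj, rfl⟩ := exists_lt_zigzag_eq y
  wlog hij : i ≤ j generalizing i j
  · rw [SimpleGraph.edist_comm]
    exact this j hj i hi (by omega)
  obtain ⟨d, rfl⟩ := Nat.exists_eq_add_of_le hij
  exact (edist_zigzag_le d hj).trans (by exact_mod_cast (by omega : d ≤ n - 1))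

lemma sub_one_le_edist_zigzag_zero_zigzag_sub_one (p : ℕ) [Fact p.Prime] :
    ((p - 1 : ℕ) : ℕ∞) ≤ (nilCleanGraph (ZMod p)).edist (zigzag _ 0) (zigzag _ (p - 1)) := by
  rw [SimpleGraph.edist_eq_sInf]
  refine le_sInf (Set.forall_mem_range.2 fun w => ?_)
  obtain ⟨j, hj, hend⟩ := exists_eq_zigzag_of_walk w rfl
  by_contra! hlt
  have hlt : w.length < p - 1 := by exact_mod_cast hlt
  have hp := (Fact.out : p.Prime).pos
  have := zigzag_injOn (Set.mem_Iio.mpr (by omega : p - 1 < p)) (Set.mem_Iio.mpr (by omega)) hend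
  omega

end ZMod

theorem stmt19 (p : ℕ) [Fact p.Prime] :
    (nilCleanGraph (ZMod p)).diam = p - 1 := by
  have hediam : (nilCleanGraph (ZMod p)).ediam = (p - 1 : ℕ) :=
    le_antisymm ediam_nilCleanGraph_zmod_le
      ((sub_one_le_edist_zigzag_zero_zigzag_sub_one p).trans SimpleGraph.edist_le_ediam)
  rw [SimpleGraph.diam, hediam, ENat.toNat_natCast]
end
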